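/- arXiv:2003.05296 — 2 statements merged into one kernel-verified Lean document; each statement's English description precedes it below -/
import Mathlib

section
/- Let p = 4k+1 be a prime and R a commutative ring of characteristic 2. For i = 0,1,2 let Q_i = Q_p(a_i,b_i,c_i) and let A_i be p×p circulant matrices over R, and let M be the 3p×6p block matrix with block rows (Q_0 Q_1 Q_2 | A_0 A_1 A_2), (Q_2 Q_0 Q_1 | A_2 A_0 A_1), (Q_1 Q_2 Q_0 | A_1 A_2 A_0). Suppose the code generated by M is self-dual, in the sense that M·M^T = 0 and there exists a 6p×3p matrix N over R with M·N = I_{3p}. Then the matrix Σ_{i=0}^{2} Q_i is invertible (a unit in the ring of p×p matrices over R). -/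
open Matrix
open scoped Classical

/-- The quadratic residue circulant matrix `Q_p(a,b,c)`: the `p × p` matrix over `R`,
indexed by `ZMod p`, whose `(i,j)` entry is `a` if `i = j`, `b` if `j - i` is a
nonzero quadratic residue modulo `p`, and `c` otherwise. -/
noncomputable def Qmat (p : ℕ) {R : Type*} [CommRing R] (a b c : R) :
    Matrix (ZMod p) (ZMod p) R :=
  Matrix.of fun i j => if i = j then a else if IsSquare (j - i) then b else c

/-- The `3×3` block circulant matrix `CIRC(B 0, B 1, B 2)` whose block rows are
`(B 0, B 1, B 2)`, `(B 2, B 0, B 1)`, `(B 1, B 2, B 0)`. -/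
def blockCirc {R n : Type*} (B : ZMod 3 → Matrix n n R) :
    Matrix (ZMod 3 × n) (ZMod 3 × n) R :=
  Matrix.of fun ix jy => B (jy.1 - ix.1) ix.2 jy.2

/-- The `3p × 6p` block matrix with block rows `(Q 0, Q 1, Q 2 | A 0, A 1, A 2)`,
`(Q 2, Q 0, Q 1 | A 2, A 0, A 1)`, `(Q 1, Q 2, Q 0 | A 1, A 2, A 0)`. -/
def Mblk {R n : Type*} (Q A : ZMod 3 → Matrix n n R) :
    Matrix (ZMod 3 × n) ((ZMod 3 × n) ⊕ (ZMod 3 × n)) R :=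
  Matrix.fromCols (blockCirc Q) (blockCirc A)

/-!
Multiplying by the block row `u = (I I I)` folds a `3 × 3` block circulant matrix onto the
sum of its blocks: `u * CIRC(B) = (∑ B) * u`, and `u * uᵀ = 3 = 1` in characteristic 2.
Folding `M * Mᵀ = 0` and `M * N = 1` therefore gives `S * Sᵀ + T * Tᵀ = 0` and
`S * X + T * Y = 1` for `S = ∑ Q i`, `T = ∑ A i`. Since `p ≡ 1 mod 4`, `-1` is a square
mod `p`, so `S` is symmetric and `S * S = T * Tᵀ`; moreover `S` and `T` commute, being
circulant. Then `T * (Tᵀ * X + S * Y) = S`, so `T` has the right inverse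
`(Tᵀ * X + S * Y) * X + Y`, hence `S * S = T * Tᵀ` is a unit.
-/

section BlockCirc

variable {n R : Type*} [Fintype n] [DecidableEq n] [CommRing R]

variable (n R) in
noncomputable def blockRowId : Matrix n (ZMod 3 × n) R :=
  Matrix.of fun x iy => if x = iy.2 then 1 else 0

theorem blockRowId_mul_blockCirc (B : ZMod 3 → Matrix n n R) :
    blockRowId n R * blockCirc B = (∑ i, B i) * blockRowId n R := by
  ext x ⟨j, y⟩
  simp only [mul_apply, blockRowId, blockCirc, of_apply, Fintype.sum_prod_type, ite_mul,
    zero_mul, one_mul, mul_ite, mul_one, mul_zero, Matrix.sum_apply, Finset.sum_ite_eq,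
    Finset.sum_ite_eq', Finset.mem_univ, if_true]
  exact Fintype.sum_equiv (Equiv.subLeft j) _ _ fun _ => rfl

theorem blockRowId_mul_transpose [CharP R 2] :
    blockRowId n R * (blockRowId n R)ᵀ = 1 := by
  ext x y
  have hblock : ∀ i : ZMod 3,
      ∑ z, blockRowId n R x (i, z) * blockRowId n R y (i, z) = (1 : Matrix n n R) x y := by
    intro i
    simp [blockRowId, one_apply, eq_comm (a := y)]
  simp only [mul_apply, transpose_apply, Fintype.sum_prod_type, hblock, Finset.sum_const,
    Finset.card_univ, ZMod.card]
  rw [show 3 = 2 + 1 from rfl, succ_nsmul, CharTwo.two_nsmul, zero_add]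

theorem blockRowId_conj_blockCirc_mul (B : ZMod 3 → Matrix n n R)
    (P : Matrix (ZMod 3 × n) (ZMod 3 × n) R) :
    blockRowId n R * (blockCirc B * P) * (blockRowId n R)ᵀ =
      (∑ i, B i) * (blockRowId n R * P * (blockRowId n R)ᵀ) := by
  rw [← Matrix.mul_assoc, blockRowId_mul_blockCirc, Matrix.mul_assoc _ _ P, Matrix.mul_assoc]

theorem blockRowId_conj_blockCirc_mul_transpose [CharP R 2] (B : ZMod 3 → Matrix n n R) :
    blockRowId n R * (blockCirc B * (blockCirc B)ᵀ) * (blockRowId n R)ᵀ =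
      (∑ i, B i) * (∑ i, B i)ᵀ := by
  rw [← Matrix.mul_assoc, Matrix.mul_assoc _ _ (blockRowId n R)ᵀ, ← transpose_mul,
    blockRowId_mul_blockCirc, transpose_mul, Matrix.mul_assoc,
    ← Matrix.mul_assoc _ _ (∑ i, B i)ᵀ, blockRowId_mul_transpose, Matrix.one_mul]

theorem sum_mul_transpose_add_sum_mul_transpose_eq_zero [CharP R 2]
    {Q A : ZMod 3 → Matrix n n R} (h : Mblk Q A * (Mblk Q A)ᵀ = 0) :
    (∑ i, Q i) * (∑ i, Q i)ᵀ + (∑ i, A i) * (∑ i, A i)ᵀ = 0 := by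
  rw [Mblk, transpose_fromCols, fromCols_mul_fromRows] at h
  have := congrArg (fun Z => blockRowId n R * Z * (blockRowId n R)ᵀ) h
  simpa only [Matrix.mul_add, Matrix.add_mul, Matrix.mul_zero, Matrix.zero_mul,
    blockRowId_conj_blockCirc_mul_transpose] using this

theorem exists_sum_mul_add_sum_mul_eq_one [CharP R 2] {Q A : ZMod 3 → Matrix n n R}
    {N : Matrix ((ZMod 3 × n) ⊕ (ZMod 3 × n)) (ZMod 3 × n) R} (h : Mblk Q A * N = 1) :
    ∃ X Y : Matrix n n R, (∑ i, Q i) * X + (∑ i, A i) * Y = 1 := by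
  rw [Mblk, ← fromRows_toRows N, fromCols_mul_fromRows] at h
  have := congrArg (fun Z => blockRowId n R * Z * (blockRowId n R)ᵀ) h
  simp only [Matrix.mul_add, Matrix.add_mul, Matrix.mul_one, blockRowId_mul_transpose,
    blockRowId_conj_blockCirc_mul] at this
  exact ⟨_, _, this⟩

end BlockCirc

theorem Matrix.isUnit_of_mul_self_eq_mul_transpose {R n : Type*} [CommRing R] [Fintype n]
    [DecidableEq n] {S T X Y : Matrix n n R} (hST : Commute S T) (hS : S * S = T * Tᵀ)
    (h : S * X + T * Y = 1) : IsUnit S := by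
  have hTS : T * (Tᵀ * X + S * Y) = S := by
    rw [Matrix.mul_add, ← Matrix.mul_assoc, ← hS, ← Matrix.mul_assoc, ← hST.eq,
      Matrix.mul_assoc, Matrix.mul_assoc, ← Matrix.mul_add, h, Matrix.mul_one]
  have hT : IsUnit T := by
    rw [isUnit_iff_isUnit_det]
    refine isUnit_det_of_right_inverse (B := (Tᵀ * X + S * Y) * X + Y) ?_
    rw [Matrix.mul_add, ← Matrix.mul_assoc, hTS, h]
  refine isUnit_of_mul_isUnit_left (y := S) ?_
  rw [hS]
  exact hT.mul ((isUnit_transpose T).mpr hT)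

section QuadraticResidue

variable {p : ℕ} {R : Type*} [CommRing R]

theorem Qmat_eq_circulant (a b c : R) :
    Qmat p a b c = circulant fun d => if d = 0 then a else if IsSquare (-d) then b else c := by
  ext i j
  simp only [Qmat, of_apply, circulant_apply, sub_eq_zero, neg_sub]

theorem Qmat_transpose (h : IsSquare (-1 : ZMod p)) (a b c : R) :
    (Qmat p a b c)ᵀ = Qmat p a b c := by
  have hsq : ∀ x : ZMod p, IsSquare (-x) ↔ IsSquare x := fun x =>
    ⟨fun hx => by simpa using h.mul hx, fun hx => by simpa using h.mul hx⟩
  ext i j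
  simp only [transpose_apply, Qmat, of_apply, eq_comm (a := j), ← neg_sub i j, hsq]

theorem commute_Qmat_circulant [NeZero p] (a b c : R) (v : ZMod p → R) :
    Commute (Qmat p a b c) (circulant v) := by
  rw [Qmat_eq_circulant]
  exact circulant_mul_comm _ _

end QuadraticResidue

theorem stmt10 {R : Type*} [CommRing R] [CharP R 2] (p k : ℕ) [Fact (Nat.Prime p)]
    (hpk : p = 4 * k + 1) (a b c : ZMod 3 → R)
    (A : ZMod 3 → Matrix (ZMod p) (ZMod p) R)
    (hA : ∀ i, ∃ v : ZMod p → R, A i = Matrix.circulant v)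
    (hself : Mblk (fun i => Qmat p (a i) (b i) (c i)) A *
      (Mblk (fun i => Qmat p (a i) (b i) (c i)) A)ᵀ = 0)
    (hfull : ∃ N : Matrix ((ZMod 3 × ZMod p) ⊕ (ZMod 3 × ZMod p)) (ZMod 3 × ZMod p) R,
      Mblk (fun i => Qmat p (a i) (b i) (c i)) A * N = 1) :
    IsUnit (∑ i : ZMod 3, Qmat p (a i) (b i) (c i)) := by
  have hneg : IsSquare (-1 : ZMod p) := ZMod.exists_sq_eq_neg_one_iff.mpr (by omega)
  have hsymm : (∑ i : ZMod 3, Qmat p (a i) (b i) (c i))ᵀ =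
      ∑ i : ZMod 3, Qmat p (a i) (b i) (c i) := by
    simp only [transpose_sum, Qmat_transpose hneg]
  have hcomm : Commute (∑ i : ZMod 3, Qmat p (a i) (b i) (c i)) (∑ i, A i) :=
    Commute.sum_left _ _ _ fun i _ => Commute.sum_right _ _ _ fun j _ => by
      obtain ⟨v, hv⟩ := hA j
      exact hv ▸ commute_Qmat_circulant _ _ _ v
  have hsq := sum_mul_transpose_add_sum_mul_transpose_eq_zero hself
  rw [hsymm, CharTwo.add_eq_zero] at hsq
  obtain ⟨N, hN⟩ := hfull
  obtain ⟨X, Y, hXY⟩ := exists_sum_mul_add_sum_mul_eq_one hN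
  exact isUnit_of_mul_self_eq_mul_transpose hcomm hsq hXY
end

section
/- Let p = 4k+3 be a prime and R a commutative ring of characteristic 2. For i = 0,1,2 let a_i, b_i, c_i ∈ R and set Q_i = Q_p(a_i,b_i,c_i). Then Σ_{i=0}^{2} Q_i Q_i^T = Q_p( Σ_{i=0}^{2} (a_i^2 + b_i^2 + c_i^2) , Σ_{i=0}^{2} (a_i b_i + a_i c_i + b_i c_i + k(b_i^2 + c_i^2)) , Σ_{i=0}^{2} (a_i b_i + a_i c_i + b_i c_i + k(b_i^2 + c_i^2)) ). -/
open Matrix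
open scoped Classical

/-!
Entry `(i, j)` of `Q Qᵀ` is the autocorrelation `∑ t, f t * f (t - (j - i))` of the first row
`f = qrRow a b c`. As `p ≡ 3 mod 4`, `-1` is a nonsquare, so exactly one of `d`, `-d` is a square
and `t ↦ d - t` exchanges the pairs `(t, t - d)` of nonzero squares with the pairs of nonsquares.
The number of such pairs of squares is `(p - 3) / 4 = k`: with `χ` the quadratic character,
`∑ t, χ t * χ (t - d) = -1` by the Jacobi sum `J(χ, χ) = -χ(-1)`. Over any commutative ring
this gives `Q Qᵀ = Q_p(a² + (2k+1)(b² + c²), a(b + c) + k(b² + c²) + (2k+1)bc, ⋯)`, and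
`2k + 1 = 1` in characteristic `2`.
-/

open Finset

lemma sum_compl_pair {ι M : Type*} [Fintype ι] [AddCommGroup M] {x y : ι} (hxy : x ≠ y)
    (f : ι → M) : ∑ t ∈ {x, y}ᶜ, f t = ∑ t, f t - f x - f y := by
  rw [← sum_compl_add_sum {x, y}, sum_pair hxy]; abel

section QuadraticResidues

variable {F : Type*} [Field F] [Fintype F]

lemma quadraticChar_neg_of_not_isSquare_neg_one (hF : ¬IsSquare (-1 : F)) (x : F) :
    quadraticChar F (-x) = -quadraticChar F x := by
  rw [neg_eq_neg_one_mul, map_mul, quadraticChar_neg_one_iff_not_isSquare.mpr hF, neg_one_mul]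

lemma isSquare_neg_iff_not_isSquare (hF : ¬IsSquare (-1 : F)) {x : F} (hx : x ≠ 0) :
    IsSquare (-x) ↔ ¬IsSquare x := by
  rw [← quadraticChar_one_iff_isSquare (neg_ne_zero.mpr hx),
    quadraticChar_neg_of_not_isSquare_neg_one hF,
    ← quadraticChar_neg_one_iff_not_isSquare, neg_eq_iff_eq_neg]

lemma quadraticChar_sum_mul_sub (hF : ringChar F ≠ 2) {d : F} (hd : d ≠ 0) :
    ∑ t, quadraticChar F t * quadraticChar F (t - d) = -1 := by
  set χ := quadraticChar F
  have hJ : jacobiSum χ χ = -χ (-1) := by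
    simpa only [(quadraticChar_isQuadratic F).inv] using
      jacobiSum_nontrivial_inv (quadraticChar_ne_one hF)
  -- substituting `t = d * x` turns the sum into `χ(d)² χ(-1) J(χ, χ)`
  calc ∑ t, χ t * χ (t - d) = ∑ x, χ (d * x) * χ (d * x - d) :=
        (Fintype.sum_equiv (Equiv.mulLeft₀ d hd) _ _ fun _ => rfl).symm
    _ = ∑ x, χ d ^ 2 * χ (-1) * (χ x * χ (1 - x)) := by
        refine Fintype.sum_congr _ _ fun x => ?_
        rw [show d * x - d = d * (-1 * (1 - x)) by ring, map_mul, map_mul, map_mul]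
        ring
    _ = -1 := by
        rw [← mul_sum, ← jacobiSum.eq_1, hJ, quadraticChar_sq_one hd, one_mul, mul_neg, ← sq,
          quadraticChar_sq_one (neg_ne_zero.mpr one_ne_zero)]

variable {k : ℕ}

lemma ringChar_ne_two_of_card_eq (hq : Fintype.card F = 4 * k + 3) : ringChar F ≠ 2 := by
  rw [Ne, FiniteField.even_card_iff_char_two, hq]; omega

lemma not_isSquare_neg_one_of_card_eq (hq : Fintype.card F = 4 * k + 3) :
    ¬IsSquare (-1 : F) := by
  rw [FiniteField.isSquare_neg_one_iff, hq]; omega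

lemma card_nonzero_isSquare (hq : Fintype.card F = 4 * k + 3) :
    #{t ∈ ({0}ᶜ : Finset F) | IsSquare t} = 2 * k + 1 := by
  have hneg :
      #{t ∈ ({0}ᶜ : Finset F) | IsSquare t} = #{t ∈ ({0}ᶜ : Finset F) | ¬IsSquare t} :=
    card_equiv (Equiv.neg F) fun t => by
      by_cases ht : t = 0
      · simp [ht]
      · simp [ht, isSquare_neg_iff_not_isSquare (not_isSquare_neg_one_of_card_eq hq) ht]
  have htotal :=
    card_filter_add_card_filter_not (s := ({0}ᶜ : Finset F)) (p := fun t => IsSquare t)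
  rw [card_compl, card_singleton, hq] at htotal
  omega

lemma card_nonzero_not_isSquare (hq : Fintype.card F = 4 * k + 3) :
    #{t ∈ ({0}ᶜ : Finset F) | ¬IsSquare t} = 2 * k + 1 := by
  have htotal :=
    card_filter_add_card_filter_not (s := ({0}ᶜ : Finset F)) (p := fun t => IsSquare t)
  rw [card_compl, card_singleton, hq, card_nonzero_isSquare hq] at htotal
  omega

lemma card_isSquare_and_isSquare_sub (hq : Fintype.card F = 4 * k + 3) {d : F} (hd : d ≠ 0) :
    #{t ∈ ({0, d}ᶜ : Finset F) | IsSquare t ∧ IsSquare (t - d)} = k := by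
  set χ := quadraticChar F
  have hF := ringChar_ne_two_of_card_eq hq
  -- `(1 + χ t) / 2` is the indicator of the nonzero squares
  have hind : ∀ t ∈ ({0, d}ᶜ : Finset F), (1 + χ t) * (1 + χ (t - d)) =
      if IsSquare t ∧ IsSquare (t - d) then 4 else 0 := by
    intro t ht
    simp only [mem_compl, mem_insert, mem_singleton, not_or] at ht
    have htd : t - d ≠ 0 := sub_ne_zero.mpr ht.2
    simp only [χ, quadraticChar_apply, quadraticCharFun, ht.1, htd, if_false]
    split_ifs <;> simp_all
  have hshift : ∑ t, χ (t - d) = 0 := by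
    rw [Fintype.sum_equiv (Equiv.subRight d) (fun t => χ (t - d)) χ fun _ => rfl,
      quadraticChar_sum_zero hF]
  have hχneg : χ (-d) = -χ d :=
    quadraticChar_neg_of_not_isSquare_neg_one (not_isSquare_neg_one_of_card_eq hq) d
  have hsum : ∑ t ∈ ({0, d}ᶜ : Finset F), (1 + χ t) * (1 + χ (t - d)) = 4 * k := by
    simp only [add_mul, mul_add, one_mul, mul_one, sum_add_distrib]
    have hχ0 : χ 0 = 0 := quadraticChar_zero
    have hsum0 : ∑ t, χ t = 0 := quadraticChar_sum_zero hF
    have hcross : ∑ t, χ t * χ (t - d) = -1 := quadraticChar_sum_mul_sub hF hd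
    simp only [sum_compl_pair hd.symm, sum_const, card_univ, hq, nsmul_eq_mul, hsum0, hshift,
      hcross, hχ0, sub_self, zero_sub, hχneg]
    push_cast
    ring
  rw [sum_congr rfl hind, ← sum_filter, sum_const, nsmul_eq_mul] at hsum
  omega

lemma card_not_isSquare_and_not_isSquare_sub (hq : Fintype.card F = 4 * k + 3) {d : F}
    (hd : d ≠ 0) : #{t ∈ ({0, d}ᶜ : Finset F) | ¬IsSquare t ∧ ¬IsSquare (t - d)} = k := by
  have hF := not_isSquare_neg_one_of_card_eq hq
  rw [← card_isSquare_and_isSquare_sub hq hd]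
  refine card_equiv (Equiv.subLeft d) fun t => ?_
  by_cases ht : t = 0
  · simp [ht]
  by_cases htd : t = d
  · simp [htd]
  have hS : ∀ s : F, s ∈ ({0, d}ᶜ : Finset F) ↔ s ≠ 0 ∧ s ≠ d := by simp
  rw [mem_filter, mem_filter, hS, hS, Equiv.subLeft_apply, sub_sub_cancel_left,
    ← neg_sub t d, isSquare_neg_iff_not_isSquare hF ht,
    isSquare_neg_iff_not_isSquare hF (sub_ne_zero.mpr htd)]
  simp [ht, htd, sub_eq_zero, Ne.symm htd, and_comm]

end QuadraticResidues

noncomputable def qrRow {F R : Type*} [Zero F] [Mul F] (a b c : R) (t : F) : R :=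
  if t = 0 then a else if IsSquare t then b else c

section QuadraticResidueRow

variable {F : Type*} [Field F] [Fintype F] {k : ℕ} {R : Type*} [CommRing R]

lemma sum_qrRow_sq (hq : Fintype.card F = 4 * k + 3) (a b c : R) :
    ∑ t : F, qrRow a b c t ^ 2 = a ^ 2 + ((2 * k + 1 : ℕ) : R) * (b ^ 2 + c ^ 2) := by
  have hrow : ∀ t ∈ ({0}ᶜ : Finset F),
      qrRow a b c t ^ 2 = if IsSquare t then b ^ 2 else c ^ 2 := by
    intro t ht
    rw [mem_compl, mem_singleton] at ht
    simp only [qrRow, ht, if_false]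
    split_ifs <;> rfl
  rw [Fintype.sum_eq_add_sum_compl 0, sum_congr rfl hrow, sum_ite, sum_const, sum_const,
    card_nonzero_isSquare hq, card_nonzero_not_isSquare hq, qrRow, if_pos rfl]
  simp only [nsmul_eq_mul]
  ring

lemma sum_qrRow_mul_qrRow_sub (hq : Fintype.card F = 4 * k + 3) {d : F} (hd : d ≠ 0)
    (a b c : R) :
    ∑ t : F, qrRow a b c t * qrRow a b c (t - d) =
      a * (b + c) + k * (b ^ 2 + c ^ 2) + ((2 * k + 1 : ℕ) : R) * (b * c) := by
  have hF := not_isSquare_neg_one_of_card_eq hq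
  have hends : qrRow a b c (0 : F) * qrRow a b c (0 - d) + qrRow a b c d * qrRow a b c (d - d) =
      a * (b + c) := by
    simp only [qrRow, zero_sub, sub_self, neg_eq_zero, hd, isSquare_neg_iff_not_isSquare hF hd,
      if_true, if_false]
    split_ifs <;> ring
  have hrow : ∀ t ∈ ({0, d}ᶜ : Finset F), qrRow a b c t * qrRow a b c (t - d) =
      b * c + (if IsSquare t ∧ IsSquare (t - d) then b * (b - c) else 0) +
        (if ¬IsSquare t ∧ ¬IsSquare (t - d) then c * (c - b) else 0) := by
    intro t ht
    simp only [mem_compl, mem_insert, mem_singleton, not_or] at ht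
    simp only [qrRow, ht.1, sub_eq_zero, ht.2, if_false]
    split_ifs <;> simp_all <;> ring
  have hcard : #({0, d}ᶜ : Finset F) = 4 * k + 1 := by
    rw [card_compl, card_pair hd.symm, hq]; rfl
  rw [← sum_compl_add_sum {0, d}, sum_pair hd.symm, hends, sum_congr rfl hrow, sum_add_distrib,
    sum_add_distrib, sum_const, ← sum_filter, ← sum_filter, sum_const, sum_const,
    card_isSquare_and_isSquare_sub hq hd, card_not_isSquare_and_not_isSquare_sub hq hd, hcard]
  simp only [nsmul_eq_mul]
  push_cast
  ring

end QuadraticResidueRow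

section Matrix

variable {R : Type*} [CommRing R] (p : ℕ)

lemma Qmat_apply (a b c : R) (i j : ZMod p) : Qmat p a b c i j = qrRow a b c (j - i) := by
  simp [Qmat, qrRow, sub_eq_zero, eq_comm]

lemma Qmat_mul_transpose_apply [NeZero p] (a b c : R) (i j : ZMod p) :
    (Qmat p a b c * (Qmat p a b c)ᵀ) i j =
      ∑ t, qrRow a b c t * qrRow a b c (t - (j - i)) := by
  simp only [mul_apply, transpose_apply, Qmat_apply]
  exact Fintype.sum_equiv (Equiv.subRight i) _ _ fun m => by
    rw [Equiv.subRight_apply, sub_sub_sub_cancel_right]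

lemma sum_Qmat {ι : Type*} [Fintype ι] (a b c : ι → R) :
    ∑ i, Qmat p (a i) (b i) (c i) = Qmat p (∑ i, a i) (∑ i, b i) (∑ i, c i) := by
  ext i j
  simp only [Matrix.sum_apply, Qmat, of_apply]
  split_ifs <;> rfl

theorem Qmat_mul_transpose [Fact p.Prime] {k : ℕ} (hpk : p = 4 * k + 3) (a b c : R) :
    Qmat p a b c * (Qmat p a b c)ᵀ =
      Qmat p (a ^ 2 + ((2 * k + 1 : ℕ) : R) * (b ^ 2 + c ^ 2))
        (a * (b + c) + k * (b ^ 2 + c ^ 2) + ((2 * k + 1 : ℕ) : R) * (b * c))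
        (a * (b + c) + k * (b ^ 2 + c ^ 2) + ((2 * k + 1 : ℕ) : R) * (b * c)) := by
  have hq : Fintype.card (ZMod p) = 4 * k + 3 := by rw [ZMod.card, hpk]
  ext i j
  rw [Qmat_mul_transpose_apply, Qmat_apply]
  rcases eq_or_ne i j with rfl | hij
  · rw [sub_self]
    simp only [sub_zero, ← sq]
    rw [sum_qrRow_sq hq, qrRow, if_pos rfl]
  · have hd : j - i ≠ 0 := sub_ne_zero.mpr hij.symm
    rw [sum_qrRow_mul_qrRow_sub hq hd]
    simp only [qrRow, hd, if_false, ite_self]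

end Matrix

theorem stmt17 {R : Type*} [CommRing R] [CharP R 2] (p k : ℕ) [Fact (Nat.Prime p)]
    (hpk : p = 4 * k + 3) (a b c : ZMod 3 → R) :
    ∑ i : ZMod 3, Qmat p (a i) (b i) (c i) * (Qmat p (a i) (b i) (c i))ᵀ =
      Qmat p (∑ i : ZMod 3, ((a i) ^ 2 + (b i) ^ 2 + (c i) ^ 2))
        (∑ i : ZMod 3, (a i * b i + a i * c i + b i * c i + (k : R) * ((b i) ^ 2 + (c i) ^ 2)))
        (∑ i : ZMod 3, (a i * b i + a i * c i + b i * c i + (k : R) * ((b i) ^ 2 + (c i) ^ 2))) := by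
  have hodd : ((2 * k + 1 : ℕ) : R) = 1 :=
    natCast_eq_one_of_odd_of_two_eq_zero (odd_two_mul_add_one k) CharTwo.two_eq_zero
  simp only [Qmat_mul_transpose p hpk, sum_Qmat, hodd]
  congr 1 <;> refine sum_congr rfl fun i _ => ?_ <;> ring
end
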